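/- Let (X,d) be a metric space and m : X×X → X a convex midpoint map. Then the m-convex hull does not change the diameter: for every nonempty closed bounded subset B of X, diam(conv_m(B)) = diam(B). -/
import Mathlib


open Metric Set TopologicalSpace

variable {X : Type*}

/-- A geodesic segment from `x` to `y`, parametrized by arclength on `[0, dist x y]`. -/
def IsGeodesicSegment [MetricSpace X] (γ : ℝ → X) (x y : X) : Prop :=
  γ 0 = x ∧ γ (dist x y) = y ∧
    ∀ s ∈ Set.Icc (0 : ℝ) (dist x y), ∀ t ∈ Set.Icc (0 : ℝ) (dist x y),
      dist (γ s) (γ t) = |s - t|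

/-- A metric space is geodesic if any two points are joined by a geodesic segment. -/
def IsGeodesicSpace (X : Type*) [MetricSpace X] : Prop :=
  ∀ x y : X, ∃ γ : ℝ → X, IsGeodesicSegment γ x y

/-- A metric space is uniquely geodesic if any two points are joined by a geodesic
segment, which is moreover unique (as a parametrized segment). -/
def IsUniquelyGeodesic (X : Type*) [MetricSpace X] : Prop :=
  ∀ x y : X, (∃ γ : ℝ → X, IsGeodesicSegment γ x y) ∧
    ∀ γ γ' : ℝ → X, IsGeodesicSegment γ x y → IsGeodesicSegment γ' x y →
      ∀ t ∈ Set.Icc (0 : ℝ) (dist x y), γ t = γ' t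

/-- Geodesic completeness: every geodesic segment extends to a full geodesic line,
i.e. an isometric embedding of `ℝ`. -/
def IsGeodesicallyComplete (X : Type*) [MetricSpace X] : Prop :=
  ∀ (x y : X) (γ : ℝ → X), IsGeodesicSegment γ x y →
    ∃ γ' : ℝ → X, Isometry γ' ∧ γ '' Set.Icc (0 : ℝ) (dist x y) ⊆ Set.range γ'

/-- Geodesics do not split: the image of the bi-infinite geodesic extension of every
nondegenerate geodesic segment is unique. -/
def GeodesicsDoNotSplit (X : Type*) [MetricSpace X] : Prop :=
  ∀ (x y : X) (γ : ℝ → X), IsGeodesicSegment γ x y → x ≠ y →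
    ∀ γ₁ γ₂ : ℝ → X, Isometry γ₁ → Isometry γ₂ →
      γ '' Set.Icc (0 : ℝ) (dist x y) ⊆ Set.range γ₁ →
      γ '' Set.Icc (0 : ℝ) (dist x y) ⊆ Set.range γ₂ →
      Set.range γ₁ = Set.range γ₂

/-- A subset is (geodesically) convex if with any two of its points it contains
the image of every geodesic segment joining them. -/
def IsGeodConvex [MetricSpace X] (C : Set X) : Prop :=
  ∀ a ∈ C, ∀ b ∈ C, ∀ γ : ℝ → X, IsGeodesicSegment γ a b →
    γ '' Set.Icc (0 : ℝ) (dist a b) ⊆ C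

/-- A midpoint map on a metric space: a symmetric map `m` with
`d(m(x,y),x) = d(x,y)/2 = d(m(x,y),y)`. -/
def IsMidpointMap [MetricSpace X] (m : X → X → X) : Prop :=
  (∀ x y, m x y = m y x) ∧
    ∀ x y, dist (m x y) x = dist x y / 2 ∧ dist (m x y) y = dist x y / 2

/-- A convex midpoint map:
`d(m(x₁,y₁), m(x₂,y₂)) ≤ (d(x₁,x₂) + d(y₁,y₂))/2` for all points. -/
def IsConvexMidpointMap [MetricSpace X] (m : X → X → X) : Prop :=
  IsMidpointMap m ∧
    ∀ x₁ x₂ y₁ y₂ : X, dist (m x₁ y₁) (m x₂ y₂) ≤ (dist x₁ x₂ + dist y₁ y₂) / 2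

/-- The space `𝒞(X,d)` of nonempty convex compact subsets of `X`, endowed with the
Hausdorff metric (as a subtype of `NonemptyCompacts X`, whose metric is the
Hausdorff distance). -/
abbrev ConvexCompacts (X : Type*) [MetricSpace X] :=
  {A : NonemptyCompacts X // IsGeodConvex (A : Set X)}

lemma isGeodConvex_singleton [MetricSpace X] (p : X) : IsGeodConvex ({p} : Set X) := by
  rintro a ha b hb γ hγ x ⟨t, ht, rfl⟩
  rw [Set.mem_singleton_iff] at ha hb
  subst ha; subst hb
  rw [dist_self] at ht
  have : t = 0 := le_antisymm ht.2 ht.1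
  subst this
  exact hγ.1

/-- The singleton `{p}` as an element of `𝒞(X,d)`. -/
def singletonCC [MetricSpace X] (p : X) : ConvexCompacts X :=
  ⟨⟨⟨{p}, isCompact_singleton⟩, Set.singleton_nonempty p⟩, isGeodConvex_singleton p⟩

/-- The singleton `{p}` as an element of `𝔉(X,d)`, the space of nonempty compact
subsets of `X` with the Hausdorff metric. -/
def singletonNC [MetricSpace X] (p : X) : NonemptyCompacts X :=
  ⟨⟨{p}, isCompact_singleton⟩, Set.singleton_nonempty p⟩

/-- The closed `r`-neighborhood `N_r(A) = {x | ∃ a ∈ A, d(a,x) ≤ r}` of a set. -/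
def closedNbhd [MetricSpace X] (r : ℝ) (A : Set X) : Set X :=
  {x : X | ∃ a ∈ A, dist a x ≤ r}

/-- A set is `m`-convex if it contains the `m`-midpoint of each pair of its points. -/
def MConvexSet [MetricSpace X] (m : X → X → X) (A : Set X) : Prop :=
  ∀ a ∈ A, ∀ a' ∈ A, m a a' ∈ A

/-- The `m`-convex hull: the intersection of all closed `m`-convex sets containing `A`. -/
def mConvexHull [MetricSpace X] (m : X → X → X) (A : Set X) : Set X :=
  ⋂₀ {C : Set X | IsClosed C ∧ MConvexSet m C ∧ A ⊆ C}

lemma midpoint_self_aux [MetricSpace X] {m : X → X → X} (hm : IsMidpointMap m) (y : X) :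
    m y y = y := by
  have := (hm.2 y y).1
  rw [dist_self] at this
  simpa [dist_eq_zero] using this

lemma mConvex_ballInter [MetricSpace X] {m : X → X → X} (hconv : IsConvexMidpointMap m)
    (S : Set X) (r : ℝ) : MConvexSet m {x | ∀ y ∈ S, dist x y ≤ r} := by
  intro a ha a' ha' y hy
  have h := hconv.2 a y a' y
  rw [midpoint_self_aux hconv.1 y] at h
  calc dist (m a a') y ≤ (dist a y + dist a' y) / 2 := h
    _ ≤ (r + r) / 2 := by gcongr; exacts [ha y hy, ha' y hy]
    _ = r := by ring

lemma closed_ballInter [MetricSpace X] (S : Set X) (r : ℝ) :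
    IsClosed {x : X | ∀ y ∈ S, dist x y ≤ r} := by
  have : {x : X | ∀ y ∈ S, dist x y ≤ r} = ⋂ y ∈ S, Metric.closedBall y r := by
    ext x; simp [Metric.mem_closedBall, dist_comm]
  rw [this]
  exact isClosed_biInter fun y _ => Metric.isClosed_closedBall

lemma subset_mConvexHull [MetricSpace X] (m : X → X → X) (B : Set X) :
    B ⊆ mConvexHull m B := fun x hx C hC => hC.2.2 hx

/-- **Lemma 2.8 (second part).** The `m`-convex hull does not change the diameter. -/
theorem mConvexHull_diam [MetricSpace X] (m : X → X → X)
    (hconv : IsConvexMidpointMap m) (B : Set X)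
    (hBne : B.Nonempty) (hBcl : IsClosed B) (hBbd : Bornology.IsBounded B) :
    Metric.diam (mConvexHull m B) = Metric.diam B := by
  set H := mConvexHull m B with hH
  -- Step 1: hull ⊆ C₁
  have h1 : H ⊆ {x | ∀ b ∈ B, dist x b ≤ Metric.diam B} := by
    intro x hx
    exact hx _ ⟨closed_ballInter B _, mConvex_ballInter hconv B _,
      fun b hb b' hb' => Metric.dist_le_diam_of_mem hBbd hb hb'⟩
  -- Step 2: hull ⊆ C₂
  have h2 : H ⊆ {x | ∀ y ∈ H, dist x y ≤ Metric.diam B} := by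
    intro x hx
    refine hx _ ⟨closed_ballInter H _, mConvex_ballInter hconv H _, fun b hb y hy => ?_⟩
    rw [dist_comm]
    exact h1 hy b hb
  have hdle : ∀ x ∈ H, ∀ y ∈ H, dist x y ≤ Metric.diam B := fun x hx y hy => h2 hx y hy
  have hHbd : Bornology.IsBounded H := by
    rcases hBne with ⟨b₀, hb₀⟩
    exact (Metric.isBounded_iff_subset_closedBall b₀).2
      ⟨Metric.diam B, fun x hx => Metric.mem_closedBall.2 (hdle x hx b₀ (subset_mConvexHull m B hb₀))⟩
  refine le_antisymm (Metric.diam_le_of_forall_dist_le Metric.diam_nonneg hdle)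
    (Metric.diam_mono (subset_mConvexHull m B) hHbd)
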